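/- Let n = dm with d | n, q a primitive n-th root of unity, and ξ ∈ k. The algebra K(d,ξ) generated by h, w with relations h^d = 1, hw = q^m wh, w^n = ξ·1 is a left comodule algebra over the Taft algebra T_q via the coaction determined by λ(h) = g^m ⊗ h and λ(w) = x ⊗ 1 + g ⊗ w; i.e. λ extends to a well-defined algebra map K(d,ξ) → T_q ⊗ K(d,ξ) satisfying the comodule axioms. -/

import Mathlib

/-!
`K(d,ξ)` is given by generators and relations, so the coaction exists as soon as the proposed
images `gᵐ ⊗ h` and `x ⊗ 1 + g ⊗ w` satisfy the relations, and the comodule axioms, being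
identities between algebra maps, need only be checked on `h` and `w`. The one nontrivial relation
is `wⁿ = ξ`: the summands `x ⊗ 1` and `g ⊗ w` `q`-commute, so the `q`-binomial theorem expands
`(x ⊗ 1 + g ⊗ w)ⁿ` with Gaussian binomial coefficients `[n choose i]_q`. These vanish for
`0 < i < n` because `q` is a primitive `n`-th root of unity, leaving `xⁿ ⊗ 1 + gⁿ ⊗ wⁿ = 1 ⊗ ξ`.
-/


open TensorProduct

noncomputable section

variable (k : Type*) [Field k] (n : ℕ) (q : k)

/-- The defining relations of the Taft algebra:
`gx = q·xg`, `gⁿ = 1`, `xⁿ = 0`. -/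
inductive TaftRel : FreeAlgebra k (Fin 2) → FreeAlgebra k (Fin 2) → Prop
  | g_pow : TaftRel ((FreeAlgebra.ι k (0 : Fin 2)) ^ n) 1
  | x_pow : TaftRel ((FreeAlgebra.ι k (1 : Fin 2)) ^ n) 0
  | gx : TaftRel (FreeAlgebra.ι k (0 : Fin 2) * FreeAlgebra.ι k (1 : Fin 2))
      (q • (FreeAlgebra.ι k (1 : Fin 2) * FreeAlgebra.ι k (0 : Fin 2)))

/-- The Taft algebra `T_q = k⟨g,x | gx = qxg, gⁿ = 1, xⁿ = 0⟩`. -/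
def Taft := RingQuot (TaftRel k n q)

instance : Ring (Taft k n q) := by unfold Taft; infer_instance
instance : Algebra k (Taft k n q) := by unfold Taft; infer_instance

/-- The grouplike generator `g` of the Taft algebra. -/
def TaftG : Taft k n q := RingQuot.mkAlgHom k (TaftRel k n q) (FreeAlgebra.ι k 0)

/-- The skew-primitive generator `x` of the Taft algebra. -/
def TaftX : Taft k n q := RingQuot.mkAlgHom k (TaftRel k n q) (FreeAlgebra.ι k 1)

variable (d m : ℕ) (ξ : k)

/-- The defining relations of `K(d,ξ)`: `h^d = 1`, `hw = q^m wh`, `wⁿ = ξ·1`. -/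
inductive KRel : FreeAlgebra k (Fin 2) → FreeAlgebra k (Fin 2) → Prop
  | h_pow : KRel ((FreeAlgebra.ι k (0 : Fin 2)) ^ d) 1
  | hw : KRel (FreeAlgebra.ι k (0 : Fin 2) * FreeAlgebra.ι k (1 : Fin 2))
      ((q ^ m) • (FreeAlgebra.ι k (1 : Fin 2) * FreeAlgebra.ι k (0 : Fin 2)))
  | w_pow : KRel ((FreeAlgebra.ι k (1 : Fin 2)) ^ n) (algebraMap k _ ξ)

/-- The comodule algebra `K(d,ξ)` over the Taft algebra. -/
def KAlg := RingQuot (KRel k n q d m ξ)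

instance : Ring (KAlg k n q d m ξ) := by unfold KAlg; infer_instance
instance : Algebra k (KAlg k n q d m ξ) := by unfold KAlg; infer_instance

/-- The generator `h` of `K(d,ξ)`. -/
def KH : KAlg k n q d m ξ := RingQuot.mkAlgHom k (KRel k n q d m ξ) (FreeAlgebra.ι k 0)

/-- The generator `w` of `K(d,ξ)`. -/
def KW : KAlg k n q d m ξ := RingQuot.mkAlgHom k (KRel k n q d m ξ) (FreeAlgebra.ι k 1)

section GaussBinom

open Finset

variable {k}

/-- `gaussBinom q i j` is the Gaussian binomial coefficient `[i + j choose i]_q`. -/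
def gaussBinom : ℕ → ℕ → k
  | 0, _ => 1
  | _ + 1, 0 => 1
  | i + 1, j + 1 => gaussBinom i (j + 1) + q ^ (i + 1) * gaussBinom (i + 1) j

@[simp]
lemma gaussBinom_zero_left (j : ℕ) : gaussBinom q 0 j = 1 := by
  rw [gaussBinom]

@[simp]
lemma gaussBinom_zero_right (i : ℕ) : gaussBinom q i 0 = 1 := by
  cases i <;> rw [gaussBinom]

def qPochhammer (t : ℕ) : k := ∏ s ∈ Finset.range t, (1 - q ^ (s + 1))

lemma qPochhammer_succ (t : ℕ) : qPochhammer q (t + 1) = qPochhammer q t * (1 - q ^ (t + 1)) :=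
  Finset.prod_range_succ _ _

lemma gaussBinom_mul_qPochhammer (i j : ℕ) :
    gaussBinom q i j * qPochhammer q i * qPochhammer q j = qPochhammer q (i + j) := by
  induction i generalizing j with
  | zero => simp [qPochhammer]
  | succ i ihi =>
    induction j with
    | zero => simp [qPochhammer]
    | succ j ihj =>
      have hi := ihi (j + 1)
      rw [qPochhammer_succ] at hi ihj
      rw [gaussBinom, qPochhammer_succ, qPochhammer_succ,
        show i + 1 + (j + 1) = i + (j + 1) + 1 by ring, qPochhammer_succ]
      rw [show i + 1 + j = i + (j + 1) by ring] at ihj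
      linear_combination (1 - q ^ (i + 1)) * hi + q ^ (i + 1) * (1 - q ^ (j + 1)) * ihj

variable {q} {n}

lemma qPochhammer_ne_zero (hq : IsPrimitiveRoot q n) {t : ℕ} (ht : t < n) :
    qPochhammer q t ≠ 0 :=
  Finset.prod_ne_zero_iff.mpr fun s hs =>
    sub_ne_zero.mpr (hq.pow_ne_one_of_pos_of_lt s.succ_ne_zero
      (by rw [Finset.mem_range] at hs; omega)).symm

lemma qPochhammer_eq_zero (hn : 0 < n) (hq : IsPrimitiveRoot q n) : qPochhammer q n = 0 :=
  Finset.prod_eq_zero (Finset.mem_range.mpr (Nat.sub_one_lt hn.ne'))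
    (by rw [Nat.sub_add_cancel hn, hq.pow_eq_one, sub_self])

lemma gaussBinom_eq_zero (hq : IsPrimitiveRoot q n) {i j : ℕ} (hi : 0 < i) (hj : 0 < j)
    (hij : i + j = n) : gaussBinom q i j = 0 := by
  have key := gaussBinom_mul_qPochhammer q i j
  rw [hij, qPochhammer_eq_zero (by omega) hq] at key
  simpa [qPochhammer_ne_zero hq (show i < n by omega), qPochhammer_ne_zero hq (show j < n by omega)]
    using key

variable (q) {M : Type*} [AddCommMonoid M] [Module k M]

lemma sum_antidiagonal_succ_gaussBinom_smul (f : ℕ → ℕ → M) (N : ℕ) :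
    ∑ p ∈ antidiagonal (N + 1), gaussBinom q p.1 p.2 • f p.1 p.2 =
      ∑ p ∈ antidiagonal N, (q ^ p.1 * gaussBinom q p.1 p.2) • f p.1 (p.2 + 1) +
        ∑ p ∈ antidiagonal N, gaussBinom q p.1 p.2 • f (p.1 + 1) p.2 := by
  cases N with
  | zero => simp [Nat.sum_antidiagonal_succ]
  | succ N =>
    have h₁ : ∑ p ∈ antidiagonal (N + 1), (q ^ p.1 * gaussBinom q p.1 p.2) • f p.1 (p.2 + 1) =
        gaussBinom q 0 (N + 1) • f 0 (N + 2) +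
          ∑ p ∈ antidiagonal N,
            (q ^ (p.1 + 1) * gaussBinom q (p.1 + 1) p.2) • f (p.1 + 1) (p.2 + 1) := by
      rw [Nat.sum_antidiagonal_succ]; simp
    have h₂ : ∑ p ∈ antidiagonal (N + 1), gaussBinom q p.1 p.2 • f (p.1 + 1) p.2 =
        gaussBinom q (N + 1) 0 • f (N + 2) 0 +
          ∑ p ∈ antidiagonal N, gaussBinom q p.1 (p.2 + 1) • f (p.1 + 1) (p.2 + 1) :=
      Nat.sum_antidiagonal_succ'
    rw [h₁, h₂, Nat.sum_antidiagonal_succ, Nat.sum_antidiagonal_succ']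
    simp only [gaussBinom, add_smul, sum_add_distrib]
    abel

end GaussBinom

section SkewCommute

open Finset

variable {k n q} {R : Type*} [Ring R] [Algebra k R] {a b : R}

lemma mul_pow_of_mul_eq_smul_mul (hab : a * b = q • (b * a)) (i : ℕ) :
    a * b ^ i = q ^ i • (b ^ i * a) := by
  induction i with
  | zero => simp
  | succ i ih =>
    rw [pow_succ, ← mul_assoc, ih, smul_mul_assoc, mul_assoc, hab, mul_smul_comm, smul_smul,
      ← pow_succ, ← mul_assoc, ← pow_succ]

lemma pow_mul_of_mul_eq_smul_mul (hab : a * b = q • (b * a)) (t : ℕ) :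
    a ^ t * b = q ^ t • (b * a ^ t) := by
  induction t with
  | zero => simp
  | succ t ih =>
    rw [pow_succ, mul_assoc, hab, mul_smul_comm, ← mul_assoc, ih, smul_mul_assoc, smul_smul,
      ← pow_succ', mul_assoc, ← pow_succ]

lemma add_pow_of_mul_eq_smul_mul (hab : a * b = q • (b * a)) (N : ℕ) :
    (b + a) ^ N = ∑ p ∈ antidiagonal N, gaussBinom q p.1 p.2 • (b ^ p.1 * a ^ p.2) := by
  induction N with
  | zero => simp
  | succ N ih =>
    rw [sum_antidiagonal_succ_gaussBinom_smul q fun i j => b ^ i * a ^ j, pow_succ', ih, add_mul,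
      mul_sum, mul_sum, add_comm]
    congr 1 <;> refine sum_congr rfl fun p _ => ?_
    · rw [mul_smul_comm, ← mul_assoc, mul_pow_of_mul_eq_smul_mul hab, smul_mul_assoc, smul_smul,
        mul_comm (gaussBinom q _ _), mul_assoc, ← pow_succ']
    · rw [mul_smul_comm, ← mul_assoc, ← pow_succ']

lemma add_pow_eq_of_mul_eq_smul_mul (hn : 0 < n) (hq : IsPrimitiveRoot q n)
    (hab : a * b = q • (b * a)) : (b + a) ^ n = b ^ n + a ^ n := by
  rw [add_pow_of_mul_eq_smul_mul hab,
    sum_eq_add_of_mem (n, 0) (0, n) (by simp) (by simp) (by simp [hn.ne'])]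
  · simp
  rintro ⟨i, j⟩ hij ⟨hne, hne'⟩
  rw [HasAntidiagonal.mem_antidiagonal] at hij
  dsimp only
  rw [gaussBinom_eq_zero hq (by grind) (by grind) hij, zero_smul]

end SkewCommute

section Presentations

variable {k n q d m ξ}

lemma TaftG_pow : TaftG k n q ^ n = 1 :=
  ((map_pow _ _ _).symm.trans (RingQuot.mkAlgHom_rel k TaftRel.g_pow)).trans (map_one _)

lemma TaftX_pow : TaftX k n q ^ n = 0 :=
  ((map_pow _ _ _).symm.trans (RingQuot.mkAlgHom_rel k TaftRel.x_pow)).trans (map_zero _)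

lemma TaftG_mul_TaftX : TaftG k n q * TaftX k n q = q • (TaftX k n q * TaftG k n q) := by
  have h := RingQuot.mkAlgHom_rel k (TaftRel.gx (k := k) (n := n) (q := q))
  rwa [map_mul, map_smul, map_mul] at h

lemma KH_pow : KH k n q d m ξ ^ d = 1 :=
  ((map_pow _ _ _).symm.trans (RingQuot.mkAlgHom_rel k KRel.h_pow)).trans (map_one _)

lemma KH_mul_KW :
    KH k n q d m ξ * KW k n q d m ξ = q ^ m • (KW k n q d m ξ * KH k n q d m ξ) := by
  have h := RingQuot.mkAlgHom_rel k
    (KRel.hw (k := k) (n := n) (q := q) (d := d) (m := m) (ξ := ξ))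
  rwa [map_mul, map_smul, map_mul] at h

lemma KW_pow : KW k n q d m ξ ^ n = algebraMap k _ ξ :=
  ((map_pow _ _ _).symm.trans (RingQuot.mkAlgHom_rel k KRel.w_pow)).trans (AlgHom.commutes _ _)

variable {A : Type*} [Semiring A] [Algebra k A]

def KAlg.lift (a b : A) (ha : a ^ d = 1) (hab : a * b = q ^ m • (b * a))
    (hb : b ^ n = algebraMap k A ξ) : KAlg k n q d m ξ →ₐ[k] A :=
  RingQuot.liftAlgHom k ⟨FreeAlgebra.lift k ![a, b], fun _ _ r => by
    cases r <;> simp [ha, hab, hb]⟩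

section

variable {a b : A} {ha : a ^ d = 1} {hab : a * b = q ^ m • (b * a)}
  {hb : b ^ n = algebraMap k A ξ}

@[simp]
lemma KAlg.lift_KH : KAlg.lift a b ha hab hb (KH k n q d m ξ) = a :=
  (RingQuot.liftAlgHom_mkAlgHom_apply _ _ _ _).trans (by simp)

@[simp]
lemma KAlg.lift_KW : KAlg.lift a b ha hab hb (KW k n q d m ξ) = b :=
  (RingQuot.liftAlgHom_mkAlgHom_apply _ _ _ _).trans (by simp)

end

@[ext]
lemma KAlg.hom_ext {f f' : KAlg k n q d m ξ →ₐ[k] A}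
    (hH : f (KH k n q d m ξ) = f' (KH k n q d m ξ))
    (hW : f (KW k n q d m ξ) = f' (KW k n q d m ξ)) : f = f' :=
  RingQuot.ringQuot_ext' _ _ _ <| FreeAlgebra.hom_ext <| funext fun i => by
    fin_cases i
    exacts [hH, hW]

end Presentations

section Coaction

variable {k n q d m ξ}

/- The `Algebra` instances of `Taft` and `KAlg` are stated over the semiring structure of the
underlying `RingQuot`, so the generic `Algebra.TensorProduct` lemmas on products do not fire by
rewriting; these two restate them with the instances of the tensor product at hand. -/
lemma tmul_mul_tmul_Taft_KAlg (a₁ a₂ : Taft k n q) (b₁ b₂ : KAlg k n q d m ξ) :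
    a₁ ⊗ₜ[k] b₁ * a₂ ⊗ₜ[k] b₂ = (a₁ * a₂) ⊗ₜ[k] (b₁ * b₂) :=
  Algebra.TensorProduct.tmul_mul_tmul (A := RingQuot (TaftRel k n q))
    (B := RingQuot (KRel k n q d m ξ)) _ _ _ _

lemma one_def_Taft_KAlg :
    (1 : Taft k n q ⊗[k] KAlg k n q d m ξ) = 1 ⊗ₜ[k] 1 :=
  rfl

lemma KAlg.coaction_rel_h_pow (hm : n = d * m) :
    ((TaftG k n q ^ m) ⊗ₜ[k] KH k n q d m ξ) ^ d = 1 := by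
  rw [Algebra.TensorProduct.tmul_pow, ← pow_mul, KH_pow, mul_comm, ← hm, TaftG_pow,
    one_def_Taft_KAlg]

lemma KAlg.coaction_rel_hw :
    (TaftG k n q ^ m) ⊗ₜ[k] KH k n q d m ξ *
        (TaftX k n q ⊗ₜ[k] 1 + TaftG k n q ⊗ₜ[k] KW k n q d m ξ) =
      q ^ m • ((TaftX k n q ⊗ₜ[k] 1 + TaftG k n q ⊗ₜ[k] KW k n q d m ξ) *
        (TaftG k n q ^ m) ⊗ₜ[k] KH k n q d m ξ) := by
  simp only [mul_add, add_mul, smul_add, tmul_mul_tmul_Taft_KAlg, mul_one, one_mul,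
    pow_mul_of_mul_eq_smul_mul TaftG_mul_TaftX, KH_mul_KW, smul_tmul', tmul_smul, ← pow_succ,
    ← pow_succ']

lemma KAlg.coaction_rel_w_pow (hn : 0 < n) (hq : IsPrimitiveRoot q n) :
    (TaftX k n q ⊗ₜ[k] 1 + TaftG k n q ⊗ₜ[k] KW k n q d m ξ) ^ n = algebraMap k _ ξ := by
  have hskew : TaftG k n q ⊗ₜ[k] KW k n q d m ξ * TaftX k n q ⊗ₜ[k] 1 =
      q • (TaftX k n q ⊗ₜ[k] 1 * TaftG k n q ⊗ₜ[k] KW k n q d m ξ) := by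
    rw [tmul_mul_tmul_Taft_KAlg, tmul_mul_tmul_Taft_KAlg, mul_one, one_mul, TaftG_mul_TaftX,
      smul_tmul']
  rw [add_pow_eq_of_mul_eq_smul_mul hn hq hskew, Algebra.TensorProduct.tmul_pow,
    Algebra.TensorProduct.tmul_pow, TaftX_pow, TaftG_pow, KW_pow, zero_tmul, zero_add,
    Algebra.TensorProduct.algebraMap_apply, Algebra.algebraMap_eq_smul_one,
    Algebra.algebraMap_eq_smul_one]
  exact (smul_tmul ξ 1 1).symm

def KAlg.coaction (hn : 0 < n) (hq : IsPrimitiveRoot q n) (hm : n = d * m) :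
    KAlg k n q d m ξ →ₐ[k] Taft k n q ⊗[k] KAlg k n q d m ξ :=
  KAlg.lift _ _ (KAlg.coaction_rel_h_pow hm) KAlg.coaction_rel_hw
    (KAlg.coaction_rel_w_pow hn hq)

variable (hn : 0 < n) (hq : IsPrimitiveRoot q n) (hm : n = d * m)

@[simp]
lemma KAlg.coaction_KH :
    KAlg.coaction hn hq hm (KH k n q d m ξ) = (TaftG k n q ^ m) ⊗ₜ[k] KH k n q d m ξ :=
  KAlg.lift_KH

@[simp]
lemma KAlg.coaction_KW :
    KAlg.coaction hn hq hm (KW k n q d m ξ) =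
      TaftX k n q ⊗ₜ[k] 1 + TaftG k n q ⊗ₜ[k] KW k n q d m ξ :=
  KAlg.lift_KW

lemma KAlg.coaction_coassoc {Δ : Taft k n q →ₐ[k] Taft k n q ⊗[k] Taft k n q}
    (hΔg : Δ (TaftG k n q) = TaftG k n q ⊗ₜ[k] TaftG k n q)
    (hΔx : Δ (TaftX k n q) = TaftX k n q ⊗ₜ[k] 1 + TaftG k n q ⊗ₜ[k] TaftX k n q) :
    (Algebra.TensorProduct.map Δ (AlgHom.id k _)).comp (KAlg.coaction hn hq hm (ξ := ξ)) =
      (Algebra.TensorProduct.assoc k k k _ _ _).symm.toAlgHom.comp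
        ((Algebra.TensorProduct.map (AlgHom.id k _) (KAlg.coaction hn hq hm)).comp
          (KAlg.coaction hn hq hm)) := by
  ext
  · simp [hΔg]
  · simp [hΔx, hΔg, one_def_Taft_KAlg, tmul_add, add_tmul, add_assoc]

lemma KAlg.coaction_counit {ε : Taft k n q →ₐ[k] k} (hεg : ε (TaftG k n q) = 1)
    (hεx : ε (TaftX k n q) = 0) :
    (Algebra.TensorProduct.lid k _).toAlgHom.comp
        ((Algebra.TensorProduct.map ε (AlgHom.id k _)).comp (KAlg.coaction hn hq hm (ξ := ξ))) =
      AlgHom.id k _ := by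
  ext
  · simp [hεg]
  · simp [hεg, hεx]

end Coaction

theorem KAlg_comodule_algebra (hn : 0 < n) (hq : IsPrimitiveRoot q n)
    (hm : n = d * m)
    -- the Hopf-algebra structure maps of the Taft algebra
    (Δ : Taft k n q →ₐ[k] Taft k n q ⊗[k] Taft k n q) (ε : Taft k n q →ₐ[k] k)
    (hΔg : Δ (TaftG k n q) = TaftG k n q ⊗ₜ[k] TaftG k n q)
    (hΔx : Δ (TaftX k n q) = TaftX k n q ⊗ₜ[k] 1 + TaftG k n q ⊗ₜ[k] TaftX k n q)
    (hεg : ε (TaftG k n q) = 1) (hεx : ε (TaftX k n q) = 0) :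
    ∃ lam : KAlg k n q d m ξ →ₐ[k] Taft k n q ⊗[k] KAlg k n q d m ξ,
      -- values on the generators
      lam (KH k n q d m ξ) = (TaftG k n q ^ m) ⊗ₜ[k] KH k n q d m ξ ∧
      lam (KW k n q d m ξ) =
        TaftX k n q ⊗ₜ[k] 1 + TaftG k n q ⊗ₜ[k] KW k n q d m ξ ∧
      -- coassociativity of the coaction
      (LinearMap.rTensor (KAlg k n q d m ξ) Δ.toLinearMap ∘ₗ lam.toLinearMap =
        (TensorProduct.assoc k _ _ _).symm.toLinearMap ∘ₗ
          LinearMap.lTensor (Taft k n q) lam.toLinearMap ∘ₗ lam.toLinearMap) ∧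
      -- counit axiom of the coaction
      ((TensorProduct.lid k (KAlg k n q d m ξ)).toLinearMap ∘ₗ
          LinearMap.rTensor (KAlg k n q d m ξ) ε.toLinearMap ∘ₗ lam.toLinearMap =
        LinearMap.id) := by
  refine ⟨KAlg.coaction hn hq hm, KAlg.coaction_KH hn hq hm, KAlg.coaction_KW hn hq hm, ?_, ?_⟩
  · exact congrArg AlgHom.toLinearMap (KAlg.coaction_coassoc hn hq hm hΔg hΔx)
  · exact congrArg AlgHom.toLinearMap (KAlg.coaction_counit hn hq hm hεg hεx)

end
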